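/- A polymatroid ρ on a finite set E belongs to Q = ⋃_{k≥2} Q_k (i.e., ρ is a k-quotient polymatroid for some k ≥ 2) if and only if ρ has no minor isomorphic to ρ_{a,b,c} for any nonnegative integers a < b < c, where ρ_{a,b,c} is the polymatroid on a two-element set {e,f} with values 0, b, c, a+c on ∅, {e}, {f}, {e,f} respectively, and a minor of ρ on a two-element set is isomorphic to ρ_{a,b,c} if it equals ρ_{a,b,c} after some bijection of its ground set with {e,f}. -/

import Mathlib

variable {α : Type*}

/-- `ρ` is an (integer) polymatroid on ground set `E`. -/
def IsPolymatroidOn {β : Type*} [DecidableEq β] (E : Finset β) (ρ : Finset β → ℤ) : Prop :=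
  ρ ∅ = 0 ∧
  (∀ A B : Finset β, A ⊆ B → B ⊆ E → ρ A ≤ ρ B) ∧
  (∀ A B : Finset β, A ⊆ E → B ⊆ E → ρ (A ∪ B) + ρ (A ∩ B) ≤ ρ A + ρ B)

/-- `r` is the rank function of a matroid on `E` (matroids are exactly the
`1`-polymatroids). -/
def IsMatroidRankOn {β : Type*} [DecidableEq β] (E : Finset β) (r : Finset β → ℤ) : Prop :=
  IsPolymatroidOn E r ∧ ∀ e ∈ E, r {e} ≤ 1

/-- The matroid `Q` (rank function `rQ`) on `E` is a quotient of the matroid `L`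
(rank function `rL`) on `E`: there are a matroid `N` on a ground set `E ∪ F` with
`F` disjoint from `E` (realized inside `α ⊕ ℕ`, which provides an unlimited supply
of fresh elements) such that `L = N∖F` and `Q = N/F`. -/
def IsQuotientOn [DecidableEq α] (E : Finset α) (rQ rL : Finset α → ℤ) : Prop :=
  ∃ (F : Finset (α ⊕ ℕ)) (rN : Finset (α ⊕ ℕ) → ℤ),
    Disjoint (E.map ⟨Sum.inl, Sum.inl_injective⟩) F ∧
    IsMatroidRankOn (E.map ⟨Sum.inl, Sum.inl_injective⟩ ∪ F) rN ∧
    (∀ X ⊆ E, rL X = rN (X.map ⟨Sum.inl, Sum.inl_injective⟩)) ∧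
    (∀ X ⊆ E, rQ X = rN (X.map ⟨Sum.inl, Sum.inl_injective⟩ ∪ F) - rN F)

/-- `ρ` belongs to the class `Q_k` of `k`-quotient polymatroids on `E`: it is a sum
of the rank functions of matroids `M_1, …, M_k` on `E` with each `M_{i+1}` a
quotient of `M_i`. -/
def MemQk [DecidableEq α] (k : ℕ) (E : Finset α) (ρ : Finset α → ℤ) : Prop :=
  ∃ M : Fin k → Finset α → ℤ,
    (∀ s, IsMatroidRankOn E (M s)) ∧
    (∀ X ⊆ E, ρ X = ∑ s, M s X) ∧
    ∀ (s : Fin k) (h : (s : ℕ) + 1 < k), IsQuotientOn E (M ⟨(s : ℕ) + 1, h⟩) (M s)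

/-!
Write `ρ(x | B) = ρ(B ∪ x) - ρ(B)`. The restriction of `ρ / B` to `{x, y}` is `ρ_{a,b,c}` exactly
when `b = ρ(x | B) < c = ρ(y | B)` and `a = ρ(x | B ∪ y) < b`, so excluding these minors means:
whenever `ρ(x | B) < ρ(y | B)`, adding `y` leaves the marginal of `x` unchanged.

If `ρ = r_{M_1} + ⋯ + r_{M_k}` with each `M_{j+1}` a quotient of `M_j`, the marginals
`r_{M_j}(x | B)` are `0` or `1` and decrease in `j`, so `r_{M_j}(x | B) = [j < ρ(x | B)]`. Reading
the exchange identity `ρ(x | B) + ρ(y | B ∪ x) = ρ(y | B) + ρ(x | B ∪ y)` in the single layer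
`j = a` then forces `ρ(y | B ∪ x) ≤ a`, i.e. `c ≤ b`.

Conversely, under the exclusion condition the sum of the marginals capped at `i`, taken along any
ordering of `X`, does not depend on the ordering: the condition is what makes it invariant under
swapping two adjacent elements. This gives functions `ρ_i` with `ρ_i(x | X) = min i ρ(x | X)`, and
the layers `ρ_{j+1} - ρ_j` have marginals `[j < ρ(x | X)]`. So they are matroids whose rank
increments decrease from one layer to the next, which makes each a quotient of the previous one,
and they telescope to `ρ`.
-/

open Finset

section Marginal

variable [DecidableEq α]

def marginal (f : Finset α → ℤ) (X : Finset α) (x : α) : ℤ := f (insert x X) - f X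

theorem marginal_add_marginal_insert (f : Finset α → ℤ) (X : Finset α) (x y : α) :
    marginal f X x + marginal f (insert x X) y = marginal f X y + marginal f (insert y X) x := by
  simp only [marginal, insert_comm x y]
  ring

variable {E : Finset α} {f g : Finset α → ℤ}

theorem le_of_marginal_nonneg (hf : ∀ X ⊆ E, ∀ x ∈ E, x ∉ X → 0 ≤ marginal f X x)
    {A B : Finset α} (hAB : A ⊆ B) (hB : B ⊆ E) : f A ≤ f B := by
  have hA : A ⊆ E := hAB.trans hB
  suffices h : ∀ D ⊆ E, f A ≤ f (A ∪ D) by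
    simpa [union_sdiff_of_subset hAB] using h (B \ A) (sdiff_subset.trans hB)
  intro D
  induction D using Finset.induction_on with
  | empty => simp
  | @insert x D _ ih =>
    intro hD
    have hxD := insert_subset_iff.1 hD
    rw [union_insert]
    by_cases hx : x ∈ A ∪ D
    · rw [insert_eq_of_mem hx]
      exact ih hxD.2
    · have := hf (A ∪ D) (union_subset hA hxD.2) x hxD.1 hx
      have := ih hxD.2
      simp only [marginal] at *
      omega

variable (hnn : ∀ X ⊆ E, ∀ x ∈ E, x ∉ X → 0 ≤ marginal f X x)
  (hanti : ∀ X Y, X ⊆ Y → Y ⊆ E → ∀ x ∈ E, x ∉ Y → marginal f Y x ≤ marginal f X x)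
include hnn hanti

theorem sub_le_sub_of_marginal_antitone {S T : Finset α} (hST : S ⊆ T) (hT : T ⊆ E) :
    ∀ D ⊆ E, f (T ∪ D) - f T ≤ f (S ∪ D) - f S := by
  have hS : S ⊆ E := hST.trans hT
  intro D
  induction D using Finset.induction_on with
  | empty => simp
  | @insert x D _ ih =>
    intro hD
    have hxD := insert_subset_iff.1 hD
    have hSD : S ∪ D ⊆ E := union_subset hS hxD.2
    have hmono : f (S ∪ D) ≤ f (insert x (S ∪ D)) :=
      le_of_marginal_nonneg hnn (subset_insert x _) (insert_subset hxD.1 hSD)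
    have := ih hxD.2
    rw [union_insert, union_insert]
    by_cases hx : x ∈ T ∪ D
    · rw [insert_eq_of_mem hx]
      omega
    · have := hanti (S ∪ D) (T ∪ D) (union_subset_union hST subset_rfl)
        (union_subset hT hxD.2) x hxD.1 hx
      simp only [marginal] at *
      omega

theorem isPolymatroidOn_of_marginal (h0 : f ∅ = 0) : IsPolymatroidOn E f := by
  refine ⟨h0, fun A B hAB hB => le_of_marginal_nonneg hnn hAB hB, fun A B hA hB => ?_⟩
  have := sub_le_sub_of_marginal_antitone hnn hanti (inter_subset_right (s₁ := A)) hB A hA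
  rw [union_comm B A, union_eq_right.2 inter_subset_left] at this
  omega

omit hnn hanti

theorem eqOn_of_marginal_eq (h0 : f ∅ = g ∅)
    (h : ∀ X ⊆ E, ∀ x ∈ E, x ∉ X → marginal f X x = marginal g X x) :
    ∀ X ⊆ E, f X = g X := by
  intro X
  induction X using Finset.induction_on with
  | empty => exact fun _ => h0
  | @insert x X hxX ih =>
    intro hX
    have hxX' := insert_subset_iff.1 hX
    have := h X hxX'.2 x hxX'.1 hxX
    have := ih hxX'.2
    simp only [marginal] at *
    omega

end Marginal

section Polymatroid

variable [DecidableEq α] {E : Finset α} {ρ : Finset α → ℤ}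

theorem marginal_nonneg (hρ : IsPolymatroidOn E ρ) {X : Finset α} {x : α}
    (hX : X ⊆ E) (hx : x ∈ E) : 0 ≤ marginal ρ X x :=
  sub_nonneg.2 (hρ.2.1 _ _ (subset_insert x X) (insert_subset hx hX))

theorem marginal_anti (hρ : IsPolymatroidOn E ρ) {X Y : Finset α} {x : α}
    (hXY : X ⊆ Y) (hY : Y ⊆ E) (hx : x ∈ E) (hxY : x ∉ Y) :
    marginal ρ Y x ≤ marginal ρ X x := by
  have h := hρ.2.2 (insert x X) Y (insert_subset hx (hXY.trans hY)) hY
  rw [insert_union, union_eq_right.2 hXY, insert_inter_of_notMem hxY,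
    inter_eq_left.2 hXY] at h
  simp only [marginal]
  omega

theorem marginal_le_singleton (hρ : IsPolymatroidOn E ρ) {X : Finset α} {x : α}
    (hX : X ⊆ E) (hx : x ∈ E) (hxX : x ∉ X) : marginal ρ X x ≤ ρ {x} := by
  have h := marginal_anti hρ (empty_subset X) hX hx hxX
  rwa [marginal, marginal, insert_empty, hρ.1, sub_zero] at h

theorem marginal_eq_zero_or_one {r : Finset α → ℤ} (hr : IsMatroidRankOn E r)
    {X : Finset α} {x : α} (hX : X ⊆ E) (hx : x ∈ E) (hxX : x ∉ X) :
    marginal r X x = 0 ∨ marginal r X x = 1 := by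
  have h0 := marginal_nonneg hr.1 hX hx
  have h1 := marginal_le_singleton hr.1 hX hx hxX
  have h2 := hr.2 x hx
  omega

end Polymatroid

section Quotient

variable [DecidableEq α] {E : Finset α} {L Q : Finset α → ℤ}

theorem sub_le_of_isQuotientOn (hq : IsQuotientOn E Q L) {X Y : Finset α} (hXY : X ⊆ Y)
    (hY : Y ⊆ E) : Q Y - Q X ≤ L Y - L X := by
  obtain ⟨F, rN, hdisj, hN, hdel, hcon⟩ := hq
  have hX : X ⊆ E := hXY.trans hY
  set ι : α ↪ α ⊕ ℕ := ⟨Sum.inl, Sum.inl_injective⟩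
  have hXYι : X.map ι ⊆ Y.map ι := map_subset_map.2 hXY
  have hYι : Y.map ι ⊆ E.map ι := map_subset_map.2 hY
  have hsub := hN.1.2.2 (Y.map ι) (X.map ι ∪ F) (hYι.trans subset_union_left)
    (union_subset_union (hXYι.trans hYι) subset_rfl)
  rw [← union_assoc, union_eq_left.2 hXYι, inter_union_distrib_left, inter_eq_right.2 hXYι,
    disjoint_iff_inter_eq_empty.1 (hdisj.mono_left hYι), union_empty] at hsub
  have := hdel X hX
  have := hdel Y hY
  have := hcon X hX
  have := hcon Y hY
  omega

theorem min_submodular_of_monotone_sub {β : Type*} [DecidableEq β] {G : Finset β}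
    {g h : Finset β → ℤ}
    (hg : ∀ A B, A ⊆ G → B ⊆ G → g (A ∪ B) + g (A ∩ B) ≤ g A + g B)
    (hh : ∀ A B, A ⊆ G → B ⊆ G → h (A ∪ B) + h (A ∩ B) ≤ h A + h B)
    (hmono : ∀ A B, A ⊆ B → B ⊆ G → g A - h A ≤ g B - h B) :
    ∀ A B, A ⊆ G → B ⊆ G →
      min (g (A ∪ B)) (h (A ∪ B)) + min (g (A ∩ B)) (h (A ∩ B))
        ≤ min (g A) (h A) + min (g B) (h B) := by
  intro A B hA hB
  have := hg A B hA hB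
  have := hh A B hA hB
  have := hmono (A ∩ B) A inter_subset_left hA
  have := hmono (A ∩ B) B inter_subset_right hB
  omega

/-- Rank function of a matroid on `E ⊔ {0, …, d - 1}` whose restriction to `E` is `L` and
whose contraction by the `d` new elements is `Q`. -/
def liftRank (L Q : Finset α → ℤ) (d : ℕ) (Z : Finset (α ⊕ ℕ)) : ℤ :=
  min (L Z.toLeft + #Z.toRight) (Q Z.toLeft + d)

theorem isMatroidRankOn_liftRank (hL : IsMatroidRankOn E L) (hQ : IsMatroidRankOn E Q)
    (hLQ : ∀ X Y, X ⊆ Y → Y ⊆ E → Q Y - Q X ≤ L Y - L X) (d : ℕ) :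
    IsMatroidRankOn (E.map Function.Embedding.inl ∪ (range d).map Function.Embedding.inr)
      (liftRank L Q d) := by
  set G := E.map Function.Embedding.inl ∪ (range d).map Function.Embedding.inr
  have hG : ∀ {Z}, Z ⊆ G → Z.toLeft ⊆ E := fun hZ a ha => by
    simpa [G] using hZ (mem_toLeft.1 ha)
  have hcard : ∀ Z Z' : Finset (α ⊕ ℕ),
      #(Z ∪ Z').toRight + #(Z ∩ Z').toRight = #Z.toRight + #Z'.toRight := fun Z Z' => by
    rw [toRight_union, toRight_inter, card_union_add_card_inter]
  refine ⟨⟨by simp [liftRank, toLeft, toRight, hL.1.1, hQ.1.1], fun A B hAB hB => ?_, ?_⟩, ?_⟩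
  · have := hL.1.2.1 _ _ (toLeft_subset_toLeft hAB) (hG hB)
    have := hQ.1.2.1 _ _ (toLeft_subset_toLeft hAB) (hG hB)
    have := card_le_card (toRight_subset_toRight hAB)
    simp only [liftRank]
    omega
  · refine min_submodular_of_monotone_sub (fun A B hA hB => ?_) (fun A B hA hB => ?_)
      (fun A B hAB hB => ?_)
    · have := hL.1.2.2 _ _ (hG hA) (hG hB)
      have := hcard A B
      rw [toLeft_union, toLeft_inter]
      omega
    · have := hQ.1.2.2 _ _ (hG hA) (hG hB)
      rw [toLeft_union, toLeft_inter]
      omega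
    · have := hLQ _ _ (toLeft_subset_toLeft hAB) (hG hB)
      have := card_le_card (toRight_subset_toRight hAB)
      omega
  · intro e he
    rcases mem_union.1 he with he | he
    · obtain ⟨a, ha, rfl⟩ := mem_map.1 he
      have hl : ({Sum.inl a} : Finset (α ⊕ ℕ)).toLeft = {a} := by ext; simp
      have hr : ({Sum.inl a} : Finset (α ⊕ ℕ)).toRight = ∅ := by ext; simp
      have := hL.2 a ha
      simp only [Function.Embedding.inl_apply, liftRank, hl, hr, card_empty]
      omega
    · obtain ⟨n, -, rfl⟩ := mem_map.1 he
      have hl : ({Sum.inr n} : Finset (α ⊕ ℕ)).toLeft = ∅ := by ext; simp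
      have hr : ({Sum.inr n} : Finset (α ⊕ ℕ)).toRight = {n} := by ext; simp
      simp only [Function.Embedding.inr_apply, liftRank, hl, hr, card_singleton, hL.1.1]
      omega

theorem isQuotientOn_of_sub_le (hL : IsMatroidRankOn E L) (hQ : IsMatroidRankOn E Q)
    (hLQ : ∀ X Y, X ⊆ Y → Y ⊆ E → Q Y - Q X ≤ L Y - L X) : IsQuotientOn E Q L := by
  have hle : ∀ X ⊆ E, Q X ≤ L X := fun X hX => by
    have := hLQ ∅ X (empty_subset X) hX
    rw [hL.1.1, hQ.1.1] at this
    omega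
  set d := (L E - Q E).toNat
  have hd : (d : ℤ) = L E - Q E := Int.toNat_of_nonneg (sub_nonneg.2 (hle E subset_rfl))
  have hXl : ∀ X : Finset α, (X.map ⟨Sum.inl, Sum.inl_injective⟩ : Finset (α ⊕ ℕ)).toLeft = X ∧
      (X.map ⟨Sum.inl, Sum.inl_injective⟩ : Finset (α ⊕ ℕ)).toRight = ∅ := fun X => by
    constructor <;> ext <;> simp
  have hFl : ((range d).map Function.Embedding.inr : Finset (α ⊕ ℕ)).toLeft = ∅ ∧
      ((range d).map Function.Embedding.inr : Finset (α ⊕ ℕ)).toRight = range d := by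
    constructor <;> ext <;> simp
  refine ⟨(range d).map Function.Embedding.inr, liftRank L Q d, ?_,
    isMatroidRankOn_liftRank hL hQ hLQ d, fun X hX => ?_, fun X hX => ?_⟩
  · simp [disjoint_left]
  · have := hLQ X E hX subset_rfl
    simp only [liftRank, (hXl X).1, (hXl X).2, card_empty]
    omega
  · have := hle X hX
    simp only [liftRank, toLeft_union, toRight_union, (hXl X).1, (hXl X).2, hFl.1, hFl.2,
      union_empty, empty_union, card_range, hL.1.1, hQ.1.1]
    omega

end Quotient

theorem Fin.eq_ite_lt_sum_of_antitone {k : ℕ} {u : Fin k → ℤ} (hu : Antitone u)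
    (h01 : ∀ j, u j = 0 ∨ u j = 1) (j : Fin k) : u j = if (j : ℤ) < ∑ i, u i then 1 else 0 := by
  have hnn : ∀ i, 0 ≤ u i := fun i => by rcases h01 i with h | h <;> omega
  rcases h01 j with h | h
  · have hsum : ∑ i, u i ≤ j := calc
      ∑ i, u i = ∑ i ∈ Iio j, u i := by
        refine (sum_subset (subset_univ _) fun i _ hi => ?_).symm
        have := hu (not_lt.1 (mem_Iio.not.1 hi))
        have := hnn i
        omega
      _ ≤ ∑ _i ∈ Iio j, (1 : ℤ) :=
        sum_le_sum fun i _ => by rcases h01 i with h | h <;> omega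
      _ = j := by simp
    rw [if_neg (by omega), h]
  · have hsum : (j : ℤ) + 1 ≤ ∑ i, u i := calc
      (j : ℤ) + 1 = ∑ _i ∈ Iic j, (1 : ℤ) := by simp
      _ = ∑ i ∈ Iic j, u i := sum_congr rfl fun i hi => by
        have := hu (mem_Iic.1 hi)
        rcases h01 i with h' | h' <;> omega
      _ ≤ ∑ i, u i := sum_le_sum_of_subset_of_nonneg (subset_univ _) fun i _ _ => hnn i
    rw [if_pos (by omega), h]

section Chain

variable [DecidableEq α] {E : Finset α} {k : ℕ} {M : Fin k → Finset α → ℤ}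

theorem antitone_marginal_of_isQuotientOn
    (hq : ∀ (s : Fin k) (h : (s : ℕ) + 1 < k), IsQuotientOn E (M ⟨(s : ℕ) + 1, h⟩) (M s))
    {X : Finset α} {z : α} (hX : X ⊆ E) (hz : z ∈ E) :
    Antitone fun j => marginal (M j) X z := by
  cases k with
  | zero => exact fun j => j.elim0
  | succ n =>
    refine Fin.antitone_iff_succ_le.2 fun i => ?_
    exact sub_le_of_isQuotientOn (hq i.castSucc (by simp)) (subset_insert z X)
      (insert_subset hz hX)

variable {ρ : Finset α → ℤ} (hsum : ∀ X ⊆ E, ρ X = ∑ j, M j X)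
  {X : Finset α} {z : α} (hX : X ⊆ E) (hz : z ∈ E)
include hsum hX hz

theorem marginal_eq_sum_marginal : marginal ρ X z = ∑ j, marginal (M j) X z := by
  simp only [marginal, hsum X hX, hsum _ (insert_subset hz hX), sum_sub_distrib]

variable (hM : ∀ j, IsMatroidRankOn E (M j)) (hzX : z ∉ X)
include hM hzX

theorem marginal_le_of_sum_matroids : marginal ρ X z ≤ k := calc
  marginal ρ X z = ∑ j, marginal (M j) X z := marginal_eq_sum_marginal hsum hX hz
  _ ≤ ∑ _j : Fin k, (1 : ℤ) :=
    sum_le_sum fun j _ => by rcases marginal_eq_zero_or_one (hM j) hX hz hzX with h | h <;> omega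
  _ = k := by simp

theorem marginal_eq_ite_of_quotient_chain
    (hq : ∀ (s : Fin k) (h : (s : ℕ) + 1 < k), IsQuotientOn E (M ⟨(s : ℕ) + 1, h⟩) (M s))
    (j : Fin k) : marginal (M j) X z = if (j : ℤ) < marginal ρ X z then 1 else 0 := by
  rw [marginal_eq_sum_marginal hsum hX hz]
  exact Fin.eq_ite_lt_sum_of_antitone (antitone_marginal_of_isQuotientOn hq hX hz)
    (fun j => marginal_eq_zero_or_one (hM j) hX hz hzX) j

end Chain

def SmallerMarginalStable [DecidableEq α] (E : Finset α) (ρ : Finset α → ℤ) : Prop :=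
  ∀ B ⊆ E, ∀ x ∈ E, ∀ y ∈ E, x ∉ B → y ∉ B → x ≠ y →
    marginal ρ B x < marginal ρ B y → marginal ρ (insert y B) x = marginal ρ B x

theorem smallerMarginalStable_of_memQk [DecidableEq α] {E : Finset α} {ρ : Finset α → ℤ}
    {k : ℕ} (hρ : IsPolymatroidOn E ρ) (hQ : MemQk k E ρ) : SmallerMarginalStable E ρ := by
  obtain ⟨M, hM, hsum, hq⟩ := hQ
  intro B hB x hx y hy hxB hyB hxy hlt
  have hyB' : insert y B ⊆ E := insert_subset hy hB
  have hxB' : insert x B ⊆ E := insert_subset hx hB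
  have hxyB : x ∉ insert y B := by simp [hxy, hxB]
  have hyxB : y ∉ insert x B := by simp [hxy.symm, hyB]
  have hle := marginal_anti hρ (subset_insert y B) hyB' hx hxyB
  by_contra hne
  have ha := marginal_nonneg hρ hyB' hx
  have hbk := marginal_le_of_sum_matroids hsum hB hx hM hxB
  have h := marginal_add_marginal_insert (M ⟨(marginal ρ (insert y B) x).toNat, by omega⟩) B x y
  rw [marginal_eq_ite_of_quotient_chain hsum hB hx hM hxB hq,
    marginal_eq_ite_of_quotient_chain hsum hB hy hM hyB hq,
    marginal_eq_ite_of_quotient_chain hsum hxB' hy hM hyxB hq,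
    marginal_eq_ite_of_quotient_chain hsum hyB' hx hM hxyB hq] at h
  have hid := marginal_add_marginal_insert ρ B x y
  simp only [Int.toNat_of_nonneg ha] at h
  split_ifs at h <;> omega

theorem smallerMarginalStable_iff_not_exists_minor [DecidableEq α] {E : Finset α}
    {ρ : Finset α → ℤ} (hρ : IsPolymatroidOn E ρ) :
    SmallerMarginalStable E ρ ↔ ¬ ∃ (A B : Finset α) (x y : α) (a b c : ℤ),
      A ⊆ E ∧ B ⊆ E ∧ Disjoint A B ∧ E \ (A ∪ B) = {x, y} ∧ x ≠ y ∧
      0 ≤ a ∧ a < b ∧ b < c ∧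
      ρ ({x} ∪ B) - ρ B = b ∧ ρ ({y} ∪ B) - ρ B = c ∧
      ρ ({x, y} ∪ B) - ρ B = a + c := by
  have hpair : ∀ (x y : α) (B : Finset α), ({x, y} : Finset α) ∪ B = insert x (insert y B) :=
    fun x y B => by rw [insert_union, ← insert_eq]
  constructor
  · rintro hs ⟨A, B, x, y, a, b, c, -, hB, -, hE, hxy, -, hab, hbc, hb, hc, hac⟩
    have hxy' : x ∈ E \ (A ∪ B) ∧ y ∈ E \ (A ∪ B) := by simp [hE]
    simp only [mem_sdiff, mem_union, not_or] at hxy'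
    rw [← insert_eq] at hb hc
    rw [hpair] at hac
    have := hs B hB x hxy'.1.1 y hxy'.2.1 hxy'.1.2.2 hxy'.2.2.2 hxy
    simp only [marginal] at this
    omega
  · intro h B hB x hx y hy hxB hyB hxy hlt
    have hyB' : insert y B ⊆ E := insert_subset hy hB
    have hle := marginal_anti hρ (subset_insert y B) hyB' hx (by simp [hxy, hxB])
    by_contra hne
    refine h ⟨E \ insert x (insert y B), B, x, y, marginal ρ (insert y B) x, marginal ρ B x,
      marginal ρ B y, sdiff_subset, hB, disjoint_sdiff_self_left.mono_right ?_, ?_, hxy,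
      marginal_nonneg hρ hyB' hx, lt_of_le_of_ne hle hne, hlt, ?_, ?_, ?_⟩
    · exact (subset_insert y B).trans (subset_insert x _)
    · ext u
      simp only [mem_sdiff, mem_union, mem_insert, mem_singleton]
      constructor
      · tauto
      · rintro (rfl | rfl) <;> simp_all
    · rw [← insert_eq]; rfl
    · rw [← insert_eq]; rfl
    · rw [hpair]
      simp only [marginal]
      ring

section Truncation

variable [DecidableEq α] {E : Finset α} {ρ : Finset α → ℤ}

def cappedMarginalSum (ρ : Finset α → ℤ) (i : ℤ) : List α → ℤ
  | [] => 0
  | x :: l => cappedMarginalSum ρ i l + min i (marginal ρ l.toFinset x)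

theorem min_marginal_add_min_marginal_insert_comm (hs : SmallerMarginalStable E ρ) (i : ℤ)
    {B : Finset α} {x y : α} (hB : B ⊆ E) (hx : x ∈ E) (hy : y ∈ E) (hxB : x ∉ B)
    (hyB : y ∉ B) (hxy : x ≠ y) :
    min i (marginal ρ B x) + min i (marginal ρ (insert x B) y)
      = min i (marginal ρ B y) + min i (marginal ρ (insert y B) x) := by
  have hid := marginal_add_marginal_insert ρ B x y
  rcases lt_trichotomy (marginal ρ B x) (marginal ρ B y) with h | h | h
  · have := hs B hB x hx y hy hxB hyB hxy h
    omega
  · omega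
  · have := hs B hB y hy x hx hyB hxB hxy.symm h
    omega

theorem cappedMarginalSum_perm (hs : SmallerMarginalStable E ρ) (i : ℤ) {l₁ l₂ : List α}
    (hp : l₁.Perm l₂) (hnd : l₁.Nodup) (hE : ∀ a ∈ l₁, a ∈ E) :
    cappedMarginalSum ρ i l₁ = cappedMarginalSum ρ i l₂ := by
  induction hp with
  | nil => rfl
  | cons x hp ih =>
    simp only [cappedMarginalSum]
    rw [ih hnd.of_cons fun a ha => hE a (List.mem_cons_of_mem x ha),
      List.toFinset_eq_of_perm _ _ hp]
  | swap x y l =>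
    simp only [List.nodup_cons, List.mem_cons, not_or] at hnd
    have hlE : l.toFinset ⊆ E := fun a ha => hE a (by simp_all)
    simp only [cappedMarginalSum, List.toFinset_cons]
    have := min_marginal_add_min_marginal_insert_comm hs i hlE (hE y (by simp)) (hE x (by simp))
      (by simpa using hnd.1.2) (by simpa using hnd.2.1) hnd.1.1
    omega
  | trans p₁ p₂ ih₁ ih₂ =>
    rw [ih₁ hnd hE, ih₂ (p₁.nodup_iff.1 hnd) fun a ha => hE a (p₁.mem_iff.2 ha)]

noncomputable def truncation (ρ : Finset α → ℤ) (i : ℤ) (X : Finset α) : ℤ :=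
  cappedMarginalSum ρ i X.toList

theorem truncation_empty (ρ : Finset α → ℤ) (i : ℤ) : truncation ρ i ∅ = 0 := by
  simp [truncation, cappedMarginalSum]

theorem marginal_truncation (hs : SmallerMarginalStable E ρ) (i : ℤ) {X : Finset α} {x : α}
    (hX : X ⊆ E) (hx : x ∈ E) (hxX : x ∉ X) :
    marginal (truncation ρ i) X x = min i (marginal ρ X x) := by
  have h := cappedMarginalSum_perm hs (ρ := ρ) i (toList_insert hxX) (nodup_toList _)
    fun a ha => by rcases mem_insert.1 (mem_toList.1 ha) with rfl | ha <;> [exact hx; exact hX ha]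
  simp only [marginal, truncation, h, cappedMarginalSum, toList_toFinset]
  ring

end Truncation

noncomputable def layer [DecidableEq α] (ρ : Finset α → ℤ) (j : ℕ) (X : Finset α) : ℤ :=
  truncation ρ (j + 1) X - truncation ρ j X

section Layer

variable [DecidableEq α] {E : Finset α} {ρ : Finset α → ℤ} (hρ : IsPolymatroidOn E ρ)
  (hs : SmallerMarginalStable E ρ)
include hρ hs

theorem marginal_layer (j : ℕ) {X : Finset α} {x : α} (hX : X ⊆ E) (hx : x ∈ E) (hxX : x ∉ X) :
    marginal (layer ρ j) X x = if (j : ℤ) < marginal ρ X x then 1 else 0 := by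
  have h1 := marginal_truncation hs (j + 1) hX hx hxX
  have h0 := marginal_truncation hs j hX hx hxX
  have := marginal_nonneg hρ hX hx
  simp only [marginal, layer] at *
  split_ifs <;> omega

theorem isMatroidRankOn_layer (j : ℕ) : IsMatroidRankOn E (layer ρ j) := by
  refine ⟨isPolymatroidOn_of_marginal (fun X hX x hx hxX => ?_)
    (fun X Y hXY hY x hx hxY => ?_) (by simp [layer, truncation_empty]), fun e he => ?_⟩
  · rw [marginal_layer hρ hs j hX hx hxX]
    split_ifs <;> omega
  · have := marginal_anti hρ hXY hY hx hxY
    rw [marginal_layer hρ hs j hY hx hxY,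
      marginal_layer hρ hs j (hXY.trans hY) hx fun h => hxY (hXY h)]
    split_ifs <;> omega
  · have := marginal_layer hρ hs j (empty_subset E) he (notMem_empty e)
    simp only [marginal, insert_empty, layer, truncation_empty] at this
    simp only [layer]
    split_ifs at this <;> omega

theorem layer_succ_sub_le (j : ℕ) {X Y : Finset α} (hXY : X ⊆ Y) (hY : Y ⊆ E) :
    layer ρ (j + 1) Y - layer ρ (j + 1) X ≤ layer ρ j Y - layer ρ j X := by
  have := le_of_marginal_nonneg (f := fun X => layer ρ j X - layer ρ (j + 1) X)
    (fun X hX x hx hxX => ?_) hXY hY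
  · omega
  have h0 := marginal_layer hρ hs j hX hx hxX
  have h1 := marginal_layer hρ hs (j + 1) hX hx hxX
  simp only [marginal] at *
  push_cast at h1
  split_ifs at h0 h1 <;> omega

theorem truncation_eqOn_self {k : ℕ} (hk : ∀ e ∈ E, ρ {e} ≤ k) :
    ∀ X ⊆ E, truncation ρ k X = ρ X :=
  eqOn_of_marginal_eq (by rw [truncation_empty, hρ.1]) fun X hX x hx hxX => by
    have := marginal_le_singleton hρ hX hx hxX
    have := hk x hx
    rw [marginal_truncation hs _ hX hx hxX]
    omega

theorem truncation_zero_eqOn_zero : ∀ X ⊆ E, truncation ρ 0 X = 0 :=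
  eqOn_of_marginal_eq (g := fun _ => 0) (truncation_empty ρ 0) fun X hX x hx hxX => by
    have := marginal_nonneg hρ hX hx
    rw [marginal_truncation hs _ hX hx hxX]
    exact (min_eq_left this).trans (sub_self 0).symm

theorem memQk_of_smallerMarginalStable {k : ℕ} (hk : ∀ e ∈ E, ρ {e} ≤ k) : MemQk k E ρ := by
  refine ⟨fun j => layer ρ j, fun j => isMatroidRankOn_layer hρ hs j, fun X hX => ?_,
    fun s _ => isQuotientOn_of_sub_le (isMatroidRankOn_layer hρ hs s)
      (isMatroidRankOn_layer hρ hs (s + 1)) fun X Y hXY hY => layer_succ_sub_le hρ hs s hXY hY⟩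
  have htel := sum_range_sub (fun n : ℕ => truncation ρ n X) k
  push_cast at htel
  rw [Fin.sum_univ_eq_sum_range (fun j => layer ρ j X) k]
  simp only [layer, htel, truncation_eqOn_self hρ hs hk X hX,
    truncation_zero_eqOn_zero hρ hs X hX, sub_zero]

end Layer

theorem stmt17 [DecidableEq α] (E : Finset α) (ρ : Finset α → ℤ)
    (hρ : IsPolymatroidOn E ρ) :
    (∃ k : ℕ, 2 ≤ k ∧ MemQk k E ρ) ↔
    ¬ ∃ (A B : Finset α) (x y : α) (a b c : ℤ),
      A ⊆ E ∧ B ⊆ E ∧ Disjoint A B ∧ E \ (A ∪ B) = {x, y} ∧ x ≠ y ∧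
      0 ≤ a ∧ a < b ∧ b < c ∧
      ρ ({x} ∪ B) - ρ B = b ∧ ρ ({y} ∪ B) - ρ B = c ∧
      ρ ({x, y} ∪ B) - ρ B = a + c := by
  rw [← smallerMarginalStable_iff_not_exists_minor hρ]
  refine ⟨fun ⟨_, _, hQ⟩ => smallerMarginalStable_of_memQk hρ hQ, fun hs => ?_⟩
  set k := max 2 (E.sup fun e => (ρ {e}).toNat)
  have hk : ∀ e ∈ E, ρ {e} ≤ k := fun e he => (Int.self_le_toNat _).trans <| by
    exact_mod_cast (le_sup (f := fun e => (ρ {e}).toNat) he).trans (le_max_right _ _)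
  exact ⟨k, le_max_left _ _, memQk_of_smallerMarginalStable hρ hs hk⟩
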